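/- If X, Y are scattered topological spaces and f : X → Y is a d-map (continuous, open, pointwise discrete), then f is rank-preserving: for every x ∈ X, ρ_X(x) = ρ_Y(f(x)), where ρ denotes Cantor-Bendixson rank. -/

import Mathlib

/-!
A d-map `f` satisfies `derivSet (f ⁻¹' A) = f ⁻¹' derivSet A` for every `A`. If `f x` is an
accumulation point of `A`, the open image of any neighbourhood of `x` meets `A` away from `f x`,
so `x` accumulates at `f ⁻¹' A`. Conversely, `x` is isolated in its fibre, so a small enough
neighbourhood of `x` meets `f ⁻¹' A` only in points whose image differs from `f x`, and
continuity carries these near `f x`. By transfinite induction `f` pulls back every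
Cantor-Bendixson derivative of `Y` to that of `X`, so `x` and `f x` leave the derivatives at the
same stage.
-/

/-- Derived set (set of limit points) of `A`. -/
def derivSet {X : Type*} [TopologicalSpace X] (A : Set X) : Set X :=
  {x | ∀ U : Set X, IsOpen U → x ∈ U → ∃ y, y ∈ U ∩ A ∧ y ≠ x}

/-- Iterated Cantor-Bendixson derivative `d^o A`. -/
noncomputable def CBd {X : Type*} [TopologicalSpace X] (A : Set X) (o : Ordinal) : Set X :=
  Ordinal.limitRecOn o A (fun _ ih => derivSet ih)
    (fun o _ ih => ⋂ b : Set.Iio o, ih b.1 b.2)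

/-- Cantor-Bendixson rank of a point: least α with x ∉ d^{α+1} X. -/
noncomputable def rank {X : Type*} [TopologicalSpace X] (x : X) : Ordinal :=
  sInf {α : Ordinal | x ∉ CBd (Set.univ : Set X) (α + 1)}

/-- A space is scattered if every nonempty subset has an isolated point. -/
def Scattered (X : Type*) [TopologicalSpace X] : Prop :=
  ∀ A : Set X, A.Nonempty → ∃ x ∈ A, ∃ U : Set X, IsOpen U ∧ U ∩ A = {x}

/-- A map is pointwise discrete if each of its point-fibers is a discrete subspace. -/
def PointwiseDiscrete {X Y : Type*} [TopologicalSpace X] (f : X → Y) : Prop :=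
  ∀ y : Y, DiscreteTopology (f ⁻¹' {y})

section CantorBendixson

variable {X : Type*} [TopologicalSpace X]

theorem CBd_zero (A : Set X) : CBd A 0 = A :=
  Ordinal.limitRecOn_zero ..

theorem CBd_succ (A : Set X) (o : Ordinal) : CBd A (o + 1) = derivSet (CBd A o) :=
  Ordinal.limitRecOn_add_one ..

theorem CBd_limit (A : Set X) {o : Ordinal} (h : Order.IsSuccLimit o) :
    CBd A o = ⋂ b : Set.Iio o, CBd A b.1 :=
  Ordinal.limitRecOn_limit _ _ _ _ h

end CantorBendixson

section DMap

variable {X Y : Type*} [TopologicalSpace X] {f : X → Y}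

theorem PointwiseDiscrete.exists_isOpen_eq_of_apply_eq (hpd : PointwiseDiscrete f) (x : X) :
    ∃ V : Set X, IsOpen V ∧ x ∈ V ∧ ∀ z ∈ V, f z = f x → z = x := by
  have := hpd (f x)
  obtain ⟨V, hV, hVx⟩ := isOpen_induced_iff.mp
    (isOpen_discrete ({⟨x, rfl⟩} : Set (f ⁻¹' {f x})))
  have mem_iff (z : X) (hz : f z = f x) : z ∈ V ↔ z = x := by
    simpa [Subtype.ext_iff] using Set.ext_iff.mp hVx ⟨z, hz⟩
  exact ⟨V, hV, (mem_iff x rfl).mpr rfl, fun z hzV hz => (mem_iff z hz).mp hzV⟩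

variable [TopologicalSpace Y]

theorem IsOpenMap.preimage_derivSet_subset (ho : IsOpenMap f) (A : Set Y) :
    f ⁻¹' derivSet A ⊆ derivSet (f ⁻¹' A) := by
  intro x hfx U hU hxU
  obtain ⟨_, ⟨⟨z, hzU, rfl⟩, hzA⟩, hzx⟩ := hfx (f '' U) (ho U hU) ⟨x, hxU, rfl⟩
  exact ⟨z, ⟨hzU, hzA⟩, fun h => hzx (congrArg f h)⟩

theorem PointwiseDiscrete.derivSet_preimage_subset (hpd : PointwiseDiscrete f)
    (hc : Continuous f) (A : Set Y) : derivSet (f ⁻¹' A) ⊆ f ⁻¹' derivSet A := by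
  intro x hx U hU hfxU
  obtain ⟨V, hV, hxV, hVfiber⟩ := hpd.exists_isOpen_eq_of_apply_eq x
  obtain ⟨z, ⟨⟨hzU, hzV⟩, hzA⟩, hzx⟩ :=
    hx (f ⁻¹' U ∩ V) ((hU.preimage hc).inter hV) ⟨hfxU, hxV⟩
  exact ⟨f z, ⟨hzU, hzA⟩, fun h => hzx (hVfiber z hzV h)⟩

theorem derivSet_preimage_of_dMap (hc : Continuous f) (ho : IsOpenMap f)
    (hpd : PointwiseDiscrete f) (A : Set Y) : derivSet (f ⁻¹' A) = f ⁻¹' derivSet A :=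
  (hpd.derivSet_preimage_subset hc A).antisymm (ho.preimage_derivSet_subset A)

theorem CBd_preimage_of_dMap (hc : Continuous f) (ho : IsOpenMap f)
    (hpd : PointwiseDiscrete f) (A : Set Y) (o : Ordinal) :
    CBd (f ⁻¹' A) o = f ⁻¹' CBd A o := by
  induction o using Ordinal.limitRecOn with
  | zero => simp only [CBd_zero]
  | add_one o ih => rw [CBd_succ, CBd_succ, ih, derivSet_preimage_of_dMap hc ho hpd]
  | limit o hlim ih =>
    rw [CBd_limit _ hlim, CBd_limit _ hlim, Set.preimage_iInter]
    exact Set.iInter_congr fun b => ih b.1 b.2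

end DMap

theorem dmap_rank_preserving_general {X Y : Type*} [TopologicalSpace X] [TopologicalSpace Y]
    (f : X → Y)
    (hc : Continuous f) (ho : IsOpenMap f) (hpd : PointwiseDiscrete f) :
    ∀ x : X, rank (f x) = rank x := by
  intro x
  unfold rank
  congr 1
  ext α
  rw [Set.mem_ofPred_eq, Set.mem_ofPred_eq, ← Set.preimage_univ (f := f),
    CBd_preimage_of_dMap hc ho hpd, Set.mem_preimage]

/-- d-maps between scattered spaces preserve Cantor-Bendixson rank. -/
theorem dmap_rank_preserving {X Y : Type*} [TopologicalSpace X] [TopologicalSpace Y]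
    (hX : Scattered X) (hY : Scattered Y) (f : X → Y)
    (hc : Continuous f) (ho : IsOpenMap f) (hpd : PointwiseDiscrete f) :
    ∀ x : X, rank (f x) = rank x :=
  dmap_rank_preserving_general f hc ho hpd
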